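/- arXiv:math/0511554 — 9 statements merged into one kernel-verified Lean document; each statement's English description precedes it below -/
import Mathlib

section
/- Let q be a nonzero complex number that is not 1. In the Lie algebra C_q^L (the quantum torus under commutator), the derived subalgebra [C_q^L, C_q^L] is spanned by the monomials x^m with q^{m1} ≠ 1 or q^{m2} ≠ 1, and C_q^L decomposes as the direct sum (as vector spaces) of its derived subalgebra and the center of the associative algebra C_q. -/
set_option maxHeartbeats 1000000

attribute [local instance 100] LieRing.ofAssociativeRing


/-- For `q ≠ 0, 1`, in the Lie algebra `C_q^L` (quantum torus under the commutator),
the derived subalgebra `[C_q^L, C_q^L]` is spanned by the monomials `x^m` with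
`q^m₁ ≠ 1` or `q^m₂ ≠ 1`, and `C_q^L` is, as a vector space, the direct sum of the
derived subalgebra and the center of the associative algebra `C_q`. -/
theorem stmt_2 (q : ℂ) (hq0 : q ≠ 0) (hq1 : q ≠ 1)
    (A : Type*) [Ring A] [Algebra ℂ A]
    (x : ℤ × ℤ → A)
    (hmul : ∀ m n : ℤ × ℤ, x m * x n = q ^ (m.2 * n.1) • x (m + n))
    (hli : LinearIndependent ℂ x)
    (hspan : Submodule.span ℂ (Set.range x) = ⊤) :
    LieSubmodule.toSubmodule (⁅(⊤ : LieIdeal ℂ A), (⊤ : LieIdeal ℂ A)⁆ : LieIdeal ℂ A) =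
        Submodule.span ℂ (x '' {m : ℤ × ℤ | q ^ m.1 ≠ 1 ∨ q ^ m.2 ≠ 1}) ∧
      IsCompl
        (LieSubmodule.toSubmodule (⁅(⊤ : LieIdeal ℂ A), (⊤ : LieIdeal ℂ A)⁆ : LieIdeal ℂ A))
        (Subalgebra.toSubmodule (Subalgebra.center ℂ A)) := by
  set S : Set (ℤ × ℤ) := {m : ℤ × ℤ | q ^ m.1 ≠ 1 ∨ q ^ m.2 ≠ 1} with hS
  set T : Set (ℤ × ℤ) := {m : ℤ × ℤ | q ^ m.1 = 1 ∧ q ^ m.2 = 1} with hT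
  -- bracket formula
  have hbr : ∀ m n : ℤ × ℤ, ⁅x m, x n⁆ = (q ^ (m.2 * n.1) - q ^ (m.1 * n.2)) • x (m + n) := by
    intro m n
    rw [Ring.lie_def, hmul, hmul, add_comm n m, mul_comm n.2 m.1, sub_smul]
  -- brackets of basis vectors lie in the span
  have key : ∀ m n : ℤ × ℤ, ⁅x m, x n⁆ ∈ Submodule.span ℂ (x '' S) := by
    intro m n
    rw [hbr]
    by_cases h : m + n ∈ S
    · exact Submodule.smul_mem _ _ (Submodule.subset_span ⟨m + n, h, rfl⟩)
    · simp only [hS, Set.mem_setOf_eq, not_or, not_not] at h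
      obtain ⟨h1, h2⟩ := h
      have e1 : q ^ n.1 = q ^ (-m.1) := by
        rw [zpow_neg]
        refine eq_inv_of_mul_eq_one_left ?_
        rw [← zpow_add₀ hq0, add_comm]
        simpa using h1
      have e2 : q ^ n.2 = q ^ (-m.2) := by
        rw [zpow_neg]
        refine eq_inv_of_mul_eq_one_left ?_
        rw [← zpow_add₀ hq0, add_comm]
        simpa using h2
      have c1 : q ^ (m.2 * n.1) = q ^ (-(m.1 * m.2)) := by
        rw [mul_comm, zpow_mul, e1, ← zpow_mul]
        ring_nf
      have c2 : q ^ (m.1 * n.2) = q ^ (-(m.1 * m.2)) := by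
        rw [mul_comm, zpow_mul, e2, ← zpow_mul]
        ring_nf
      rw [c1, c2, sub_self, zero_smul]
      exact Submodule.zero_mem _
  have hmem : ∀ a : A, a ∈ Submodule.span ℂ (Set.range x) := by
    rw [hspan]; exact fun a => trivial
  -- all brackets lie in the span
  have main : ∀ a b : A, ⁅a, b⁆ ∈ Submodule.span ℂ (x '' S) := by
    intro a b
    refine Submodule.span_induction
      (p := fun a _ => ∀ b ∈ Submodule.span ℂ (Set.range x),
        ⁅a, b⁆ ∈ Submodule.span ℂ (x '' S)) ?_ ?_ ?_ ?_ (hmem a) b (hmem b)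
    · rintro _ ⟨m, rfl⟩ b hb
      refine Submodule.span_induction
        (p := fun b _ => ⁅x m, b⁆ ∈ Submodule.span ℂ (x '' S)) ?_ ?_ ?_ ?_ hb
      · rintro _ ⟨n, rfl⟩; exact key m n
      · simp
      · intro y z _ _ hy hz; rw [lie_add]; exact Submodule.add_mem _ hy hz
      · intro c y _ hy; rw [lie_smul]; exact Submodule.smul_mem _ c hy
    · intro b _; simp
    · intro y z _ _ hy hz b hb; rw [add_lie]
      exact Submodule.add_mem _ (hy b hb) (hz b hb)
    · intro c y _ hy b hb; rw [smul_lie]; exact Submodule.smul_mem _ c (hy b hb)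
  -- first statement: derived = span
  have hderived :
      LieSubmodule.toSubmodule (⁅(⊤ : LieIdeal ℂ A), (⊤ : LieIdeal ℂ A)⁆ : LieIdeal ℂ A) =
        Submodule.span ℂ (x '' S) := by
    apply le_antisymm
    · rw [LieSubmodule.lieIdeal_oper_eq_linear_span']
      rw [Submodule.span_le]
      rintro _ ⟨a, -, b, -, rfl⟩
      exact main a b
    · rw [Submodule.span_le]
      rintro _ ⟨m, hm, rfl⟩
      rcases hm with h1 | h2
      · have hb := hbr (0, 1) (m.1, m.2 - 1)
        have hsum : ((0 : ℤ), (1 : ℤ)) + (m.1, m.2 - 1) = m := by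
          ext <;> simp
        rw [hsum] at hb
        simp only [one_mul, zero_mul, zpow_zero] at hb
        have hc : q ^ m.1 - 1 ≠ 0 := sub_ne_zero.mpr h1
        have hx : x m = (q ^ m.1 - 1)⁻¹ • ⁅x (0, 1), x (m.1, m.2 - 1)⁆ := by
          rw [hb, smul_smul, inv_mul_cancel₀ hc, one_smul]
        rw [hx]
        exact Submodule.smul_mem _ _
          (LieSubmodule.lie_mem_lie (LieSubmodule.mem_top _) (LieSubmodule.mem_top _))
      · have hb := hbr (1, 0) (m.1 - 1, m.2)
        have hsum : ((1 : ℤ), (0 : ℤ)) + (m.1 - 1, m.2) = m := by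
          ext <;> simp
        rw [hsum] at hb
        simp only [one_mul, zero_mul, zpow_zero] at hb
        have hc : (1 : ℂ) - q ^ m.2 ≠ 0 := sub_ne_zero.mpr (Ne.symm h2)
        have hx : x m = ((1 : ℂ) - q ^ m.2)⁻¹ • ⁅x (1, 0), x (m.1 - 1, m.2)⁆ := by
          rw [hb, smul_smul, inv_mul_cancel₀ hc, one_smul]
        rw [hx]
        exact Submodule.smul_mem _ _
          (LieSubmodule.lie_mem_lie (LieSubmodule.mem_top _) (LieSubmodule.mem_top _))
  -- the basis
  have hsp : ⊤ ≤ Submodule.span ℂ (Set.range x) := hspan ▸ le_rfl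
  set B : Module.Basis (ℤ × ℤ) ℂ A := Module.Basis.mk hli hsp with hBdef
  have hB : ⇑B = x := Module.Basis.coe_mk hli hsp
  have hrepx : ∀ m : ℤ × ℤ, B.repr (x m) = Finsupp.single m 1 := by
    intro m; rw [← hB]; exact B.repr_self m
  -- center = span (x '' T)
  have hcenter : Subalgebra.toSubmodule (Subalgebra.center ℂ A) =
      Submodule.span ℂ (x '' T) := by
    apply le_antisymm
    · intro a ha
      rw [Subalgebra.mem_toSubmodule, Subalgebra.mem_center_iff] at ha
      have hzero : ∀ n m0 : ℤ × ℤ,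
          B.repr a m0 * (q ^ (n.2 * m0.1) - q ^ (m0.2 * n.1)) = 0 := by
        intro n m0
        have hf : x n * a - a * x n = 0 := by rw [ha (x n), sub_self]
        have hrepr := B.linearCombination_repr a
        set c := B.repr a with hcdef
        have expand : x n * a - a * x n =
            c.sum fun m cm => (cm * (q ^ (n.2 * m.1) - q ^ (m.2 * n.1))) • x (m + n) := by
          conv_lhs => rw [← hrepr]
          rw [Finsupp.linearCombination_apply, Finsupp.sum, Finsupp.sum,
            Finset.mul_sum, Finset.sum_mul, ← Finset.sum_sub_distrib]
          refine Finset.sum_congr rfl fun m _ => ?_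
          rw [hB, mul_smul_comm, smul_mul_assoc, hmul, hmul, add_comm n m,
            ← smul_sub, ← sub_smul, smul_smul]
        rw [expand] at hf
        have h2 := congrArg (⇑B.repr) hf
        rw [map_finsuppSum, map_zero] at h2
        simp only [map_smul, hrepx, Finsupp.smul_single', mul_one] at h2
        have h3 := DFunLike.congr_fun h2 (m0 + n)
        rw [Finsupp.sum_apply, Finsupp.zero_apply] at h3
        simp only [Finsupp.single_apply, add_left_inj] at h3
        rw [Finsupp.sum] at h3
        rw [Finset.sum_ite_eq' c.support m0
          (fun m => c m * (q ^ (n.2 * m.1) - q ^ (m.2 * n.1)))] at h3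
        by_cases hm0 : m0 ∈ c.support
        · rw [if_pos hm0] at h3; exact h3
        · rw [Finsupp.notMem_support_iff] at hm0
          rw [hm0, zero_mul]
      have hT0 : ∀ m0 : ℤ × ℤ, m0 ∉ T → B.repr a m0 = 0 := by
        intro m0 hm0
        rw [hT, Set.mem_setOf_eq, not_and_or] at hm0
        rcases hm0 with h1 | h2
        · have := hzero (0, 1) m0
          simp only [one_mul, mul_zero, zpow_zero] at this
          have hc : q ^ m0.1 - 1 ≠ 0 := sub_ne_zero.mpr h1
          exact (mul_eq_zero.mp this).resolve_right hc
        · have := hzero (1, 0) m0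
          simp only [zero_mul, mul_one, zpow_zero] at this
          have hc : (1 : ℂ) - q ^ m0.2 ≠ 0 := sub_ne_zero.mpr (Ne.symm h2)
          exact (mul_eq_zero.mp this).resolve_right hc
      rw [← hB, Module.Basis.mem_span_image]
      intro m0 hm0
      by_contra hmT
      exact (Finsupp.mem_support_iff.mp hm0) (hT0 m0 hmT)
    · rw [Submodule.span_le]
      rintro _ ⟨m, hm, rfl⟩
      rw [SetLike.mem_coe, Subalgebra.mem_toSubmodule, Subalgebra.mem_center_iff]
      intro b
      refine Submodule.span_induction
        (p := fun b _ => b * x m = x m * b) ?_ ?_ ?_ ?_ (hmem b)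
      · rintro _ ⟨n, rfl⟩
        rw [hmul, hmul, add_comm n m]
        obtain ⟨h1, h2⟩ := hm
        have e1 : q ^ (n.2 * m.1) = 1 := by
          rw [mul_comm, zpow_mul, h1, one_zpow]
        have e2 : q ^ (m.2 * n.1) = 1 := by
          rw [zpow_mul, h2, one_zpow]
        rw [e1, e2]
      · simp
      · intro y z _ _ hy hz; rw [add_mul, mul_add, hy, hz]
      · intro c y _ hy; rw [smul_mul_assoc, mul_smul_comm, hy]
  refine ⟨hderived, ?_⟩
  rw [hderived, hcenter]
  constructor
  · exact hli.disjoint_span_image (by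
      rw [Set.disjoint_left]
      intro m hmS hmT
      rw [hS, Set.mem_setOf_eq] at hmS
      rw [hT, Set.mem_setOf_eq] at hmT
      tauto)
  · rw [codisjoint_iff, ← Submodule.span_union, ← Set.image_union]
    have : S ∪ T = Set.univ := by
      ext m
      simp only [Set.mem_union, hS, hT, Set.mem_setOf_eq, Set.mem_univ, iff_true]
      tauto
    rw [this, Set.image_univ, hspan]
end

section
/- Fix N ≥ 2, q a primitive N-th root of unity, a ∈ {0,1}, α ∈ C^2, b ∈ C. On the vector space with basis {v_k : k ∈ Z^2}, the formulas x^m · v_k = (q^{m2 k1} - a q^{m1 k2}) v_{m+k} for m ∈ Z^2 \ N·Z^2, and (x^n ∂) · v_k = ⟨∂, α + k + b n⟩ v_{n+k} for n ∈ N·Z^2, ∂ ∈ C∂_1 ⊕ C∂_2, define a module A_{a,α,b} over the Lie algebra Der(C_q); in particular the required bracket compatibilities hold: [x^m, x^{m'}]·v = x^m·(x^{m'}·v) − x^{m'}·(x^m·v) for m, m' ∈ Z^2\N·Z^2, and similarly for brackets involving x^n ∂. -/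
/-!
Every operator in play shifts the basis: `x^m` sends `v_k` to a multiple of `v_(m+k)` and
`x^n ∂` sends it to a multiple of `v_(n+k)`. A commutator of two such operators therefore
shifts by the sum of the two degrees, with coefficient `f(m' + k) g(k) − g(m + k) f(k)`, and
each compatibility becomes an identity between scalars. For two monomials the cross terms cancel
and the remaining terms factor because `a² = a`; when `m + m' ∈ N·ℤ²` the factor
`q^(m₂m₁') − q^(m₁m₂')` vanishes since `q^N = 1`. When a derivation is involved, `q^N = 1` makes
the monomial coefficients `N·ℤ²`-periodic, and what is left is linear in `k`.
-/

namespace Module.End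

theorem lie_apply_of_shift {R ι V : Type*} [CommRing R] [AddCommGroup V] [Module R V]
    [AddCommMonoid ι] {A B : Module.End R V} {v : ι → V} {m m' : ι} {f g : ι → R}
    (hA : ∀ k, A (v k) = f k • v (m + k)) (hB : ∀ k, B (v k) = g k • v (m' + k)) (k : ι) :
    ⁅A, B⁆ (v k) = (f (m' + k) * g k - g (m + k) * f k) • v (m + m' + k) := by
  rw [Ring.lie_def, LinearMap.sub_apply, Module.End.mul_apply, Module.End.mul_apply, hB,
    map_smul, hA, hA, map_smul, hB, smul_smul, smul_smul, sub_smul, add_assoc,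
    add_left_comm m' m k, mul_comm (g k), mul_comm (f k)]

end Module.End

section Coefficients

variable {K : Type*} [Field K]

theorem zpow_eq_zpow_of_dvd_sub {q : K} {N : ℕ} (hq0 : q ≠ 0) (hqN : q ^ N = 1) {e e' : ℤ}
    (h : (N : ℤ) ∣ e - e') : q ^ e = q ^ e' := by
  obtain ⟨t, ht⟩ := h
  rw [← sub_add_cancel e e', zpow_add₀ hq0, ht, zpow_mul, zpow_natCast, hqN, one_zpow, one_mul]

theorem zpow_cross_eq_of_dvd_add {q : K} {N : ℕ} (hq0 : q ≠ 0) (hqN : q ^ N = 1)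
    {m m' : ℤ × ℤ} (h₁ : (N : ℤ) ∣ m.1 + m'.1) (h₂ : (N : ℤ) ∣ m.2 + m'.2) :
    q ^ (m.2 * m'.1) = q ^ (m.1 * m'.2) := by
  refine zpow_eq_zpow_of_dvd_sub hq0 hqN ?_
  have : m.2 * m'.1 - m.1 * m'.2 = m.2 * (m.1 + m'.1) - m.1 * (m.2 + m'.2) := by ring
  rw [this]
  exact dvd_sub (h₁.mul_left _) (h₂.mul_left _)

/-- The coefficient of `v_(m+k)` in `x^m · v_k`. -/
def monomialCoeff (q a : K) (m k : ℤ × ℤ) : K := q ^ (m.2 * k.1) - a * q ^ (m.1 * k.2)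

/-- The coefficient of `v_(n+k)` in `(x^n ∂) · v_k`, i.e. `⟨∂, α + k + b n⟩` for
`∂ = d.1 ∂₁ + d.2 ∂₂`. -/
def derivationCoeff (α : K × K) (b : K) (d : K × K) (n k : ℤ × ℤ) : K :=
  d.1 * (α.1 + k.1 + b * n.1) + d.2 * (α.2 + k.2 + b * n.2)

theorem monomialCoeff_commutator {q a : K} (hq0 : q ≠ 0) (ha : IsIdempotentElem a)
    (m m' k : ℤ × ℤ) :
    monomialCoeff q a m (m' + k) * monomialCoeff q a m' k
        - monomialCoeff q a m' (m + k) * monomialCoeff q a m k =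
      (q ^ (m.2 * m'.1) - q ^ (m.1 * m'.2)) * monomialCoeff q a (m + m') k := by
  simp only [monomialCoeff, Prod.fst_add, Prod.snd_add, mul_add, add_mul, zpow_add₀ hq0]
  rw [mul_comm m'.2 m.1, mul_comm m'.1 m.2]
  linear_combination (q ^ (m.1 * m'.2) - q ^ (m.2 * m'.1)) * q ^ (m.1 * k.2)
    * q ^ (m'.1 * k.2) * ha.eq

theorem monomialCoeff_add_left_of_dvd {q a : K} {N : ℕ} (hq0 : q ≠ 0) (hqN : q ^ N = 1)
    {n : ℤ × ℤ} (h₁ : (N : ℤ) ∣ n.1) (h₂ : (N : ℤ) ∣ n.2) (m k : ℤ × ℤ) :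
    monomialCoeff q a (n + m) k = monomialCoeff q a m k := by
  have e₁ : q ^ ((n + m).2 * k.1) = q ^ (m.2 * k.1) :=
    zpow_eq_zpow_of_dvd_sub hq0 hqN (by simpa [add_mul] using h₂.mul_right k.1)
  have e₂ : q ^ ((n + m).1 * k.2) = q ^ (m.1 * k.2) :=
    zpow_eq_zpow_of_dvd_sub hq0 hqN (by simpa [add_mul] using h₁.mul_right k.2)
  rw [monomialCoeff, e₁, e₂, monomialCoeff]

theorem monomialCoeff_add_right_of_dvd {q a : K} {N : ℕ} (hq0 : q ≠ 0) (hqN : q ^ N = 1)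
    {n : ℤ × ℤ} (h₁ : (N : ℤ) ∣ n.1) (h₂ : (N : ℤ) ∣ n.2) (m k : ℤ × ℤ) :
    monomialCoeff q a m (n + k) = monomialCoeff q a m k := by
  have e₁ : q ^ (m.2 * (n + k).1) = q ^ (m.2 * k.1) :=
    zpow_eq_zpow_of_dvd_sub hq0 hqN (by simpa [mul_add] using h₁.mul_left m.2)
  have e₂ : q ^ (m.1 * (n + k).2) = q ^ (m.1 * k.2) :=
    zpow_eq_zpow_of_dvd_sub hq0 hqN (by simpa [mul_add] using h₂.mul_left m.1)
  rw [monomialCoeff, e₁, e₂, monomialCoeff]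

theorem derivationCoeff_add_right_sub (α : K × K) (b : K) (d : K × K) (n m k : ℤ × ℤ) :
    derivationCoeff α b d n (m + k) - derivationCoeff α b d n k = d.1 * m.1 + d.2 * m.2 := by
  simp only [derivationCoeff, Prod.fst_add, Prod.snd_add]
  push_cast
  ring

theorem derivationCoeff_commutator (α : K × K) (b : K) (d d' : K × K) (n n' k : ℤ × ℤ) :
    derivationCoeff α b d n (n' + k) * derivationCoeff α b d' n' k
        - derivationCoeff α b d' n' (n + k) * derivationCoeff α b d n k =
      (d.1 * n'.1 + d.2 * n'.2) * derivationCoeff α b d' (n + n') k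
        - (d'.1 * n.1 + d'.2 * n.2) * derivationCoeff α b d (n + n') k := by
  simp only [derivationCoeff, Prod.fst_add, Prod.snd_add]
  push_cast
  ring

end Coefficients

/-- For `N ≥ 2`, `q` a primitive `N`-th root of unity, `a ∈ {0,1}`, `α ∈ ℂ²`, `b ∈ ℂ`,
the formulas `x^m · v_k = (q^(m₂k₁) − a q^(m₁k₂)) v_(m+k)` (for `m ∈ ℤ² \ N·ℤ²`) and
`(x^n ∂) · v_k = ⟨∂, α + k + b n⟩ v_(n+k)` (for `n ∈ N·ℤ²`) define a module
`A_{a,α,b}` over `Der C_q`: the required bracket compatibilities hold on each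
basis vector `v_k`. -/
theorem stmt_5 (N : ℕ) (hN : 2 ≤ N) (q : ℂ) (hq : IsPrimitiveRoot q N)
    (a : ℂ) (ha : a = 0 ∨ a = 1) (α : ℂ × ℂ) (b : ℂ)
    (V : Type*) [AddCommGroup V] [Module ℂ V] (v : ℤ × ℤ → V)
    (X : ℤ × ℤ → Module.End ℂ V) (T : ℤ × ℤ → ℂ × ℂ → Module.End ℂ V)
    (hX : ∀ m k : ℤ × ℤ, ¬((N : ℤ) ∣ m.1 ∧ (N : ℤ) ∣ m.2) →
      X m (v k) = (q ^ (m.2 * k.1) - a * q ^ (m.1 * k.2)) • v (m + k))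
    (hT : ∀ n k : ℤ × ℤ, (N : ℤ) ∣ n.1 → (N : ℤ) ∣ n.2 → ∀ d : ℂ × ℂ,
      T n d (v k) =
        (d.1 * (α.1 + (k.1 : ℂ) + b * (n.1 : ℂ)) + d.2 * (α.2 + (k.2 : ℂ) + b * (n.2 : ℂ)))
          • v (n + k)) :
    (∀ m m' : ℤ × ℤ, ¬((N : ℤ) ∣ m.1 ∧ (N : ℤ) ∣ m.2) →
        ¬((N : ℤ) ∣ m'.1 ∧ (N : ℤ) ∣ m'.2) →
        ¬((N : ℤ) ∣ (m + m').1 ∧ (N : ℤ) ∣ (m + m').2) → ∀ k : ℤ × ℤ,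
        ⁅X m, X m'⁆ (v k) = (q ^ (m.2 * m'.1) - q ^ (m.1 * m'.2)) • X (m + m') (v k)) ∧
    (∀ m m' : ℤ × ℤ, ¬((N : ℤ) ∣ m.1 ∧ (N : ℤ) ∣ m.2) →
        ¬((N : ℤ) ∣ m'.1 ∧ (N : ℤ) ∣ m'.2) →
        ((N : ℤ) ∣ (m + m').1 ∧ (N : ℤ) ∣ (m + m').2) → ∀ k : ℤ × ℤ,
        ⁅X m, X m'⁆ (v k) = 0) ∧
    (∀ n m : ℤ × ℤ, (N : ℤ) ∣ n.1 → (N : ℤ) ∣ n.2 →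
        ¬((N : ℤ) ∣ m.1 ∧ (N : ℤ) ∣ m.2) → ∀ d : ℂ × ℂ, ∀ k : ℤ × ℤ,
        ⁅T n d, X m⁆ (v k) = (d.1 * (m.1 : ℂ) + d.2 * (m.2 : ℂ)) • X (n + m) (v k)) ∧
    (∀ n n' : ℤ × ℤ, (N : ℤ) ∣ n.1 → (N : ℤ) ∣ n.2 → (N : ℤ) ∣ n'.1 → (N : ℤ) ∣ n'.2 →
        ∀ d d' : ℂ × ℂ, ∀ k : ℤ × ℤ,
        ⁅T n d, T n' d'⁆ (v k) =
          (d.1 * (n'.1 : ℂ) + d.2 * (n'.2 : ℂ)) • T (n + n') d' (v k)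
            - (d'.1 * (n.1 : ℂ) + d'.2 * (n.2 : ℂ)) • T (n + n') d (v k)) := by
  have hq0 : q ≠ 0 := hq.ne_zero (by omega)
  have hqN : q ^ N = 1 := hq.pow_eq_one
  have ha' : IsIdempotentElem a := by rcases ha with rfl | rfl <;> simp [IsIdempotentElem]
  have hX' : ∀ m, ¬((N : ℤ) ∣ m.1 ∧ (N : ℤ) ∣ m.2) →
      ∀ k, X m (v k) = monomialCoeff q a m k • v (m + k) := fun m hm k => hX m k hm
  have hT' : ∀ n, (N : ℤ) ∣ n.1 → (N : ℤ) ∣ n.2 → ∀ d,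
      ∀ k, T n d (v k) = derivationCoeff α b d n k • v (n + k) :=
    fun n h₁ h₂ d k => hT n k h₁ h₂ d
  refine ⟨?_, ?_, ?_, ?_⟩
  · intro m m' hm hm' hmm' k
    rw [Module.End.lie_apply_of_shift (hX' m hm) (hX' m' hm'), hX' _ hmm', smul_smul,
      monomialCoeff_commutator hq0 ha']
  · rintro m m' hm hm' ⟨h₁, h₂⟩ k
    rw [Module.End.lie_apply_of_shift (hX' m hm) (hX' m' hm'), monomialCoeff_commutator hq0 ha',
      zpow_cross_eq_of_dvd_add hq0 hqN h₁ h₂, sub_self, zero_mul, zero_smul]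
  · intro n m h₁ h₂ hm d k
    have hnm : ¬((N : ℤ) ∣ (n + m).1 ∧ (N : ℤ) ∣ (n + m).2) := fun h =>
      hm ⟨(dvd_add_right h₁).mp h.1, (dvd_add_right h₂).mp h.2⟩
    rw [Module.End.lie_apply_of_shift (hT' n h₁ h₂ d) (hX' m hm), hX' _ hnm, smul_smul,
      monomialCoeff_add_right_of_dvd hq0 hqN h₁ h₂, monomialCoeff_add_left_of_dvd hq0 hqN h₁ h₂,
      mul_comm (monomialCoeff q a m k), ← sub_mul, derivationCoeff_add_right_sub]
  · intro n n' h₁ h₂ h₁' h₂' d d' k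
    have hs₁ : (N : ℤ) ∣ (n + n').1 := dvd_add h₁ h₁'
    have hs₂ : (N : ℤ) ∣ (n + n').2 := dvd_add h₂ h₂'
    rw [Module.End.lie_apply_of_shift (hT' n h₁ h₂ d) (hT' n' h₁' h₂' d'), hT' _ hs₁ hs₂,
      hT' _ hs₁ hs₂, smul_smul, smul_smul, ← sub_smul, derivationCoeff_commutator]
end

section
/- Let N = 2 and q = −1. The module A_{1,α,b} decomposes as a direct sum of the two submodules A'_{1,α,b} = span{v_k : k ∈ Z^2 \ 2Z^2} and A''_{1,α,b} = span{v_k : k ∈ 2Z^2}; moreover every element x^m with m ∈ Z^2 \ 2Z^2 acts as zero on A''_{1,α,b}. -/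
/-!
Since `2ℤ²` is a subgroup, translating by `n ∈ 2ℤ²` preserves both `2ℤ²` and its complement,
so every `x^n ∂` preserves `A'` and `A''`. For `m ∉ 2ℤ²` the coefficient
`(-1)^(m₂k₁) - (-1)^(m₁k₂)` depends only on the parity of `m₂k₁ - m₁k₂`, and this difference
is even both when `k ∈ 2ℤ²` and when `m + k ∈ 2ℤ²` (then `k ≡ m`). Hence `x^m` kills `A''`,
and it maps `A'` into `A'` because the only basis vectors outside `A'` it could reach come
with coefficient zero.
-/

open Submodule

section SpanImage

variable {R M ι : Type*} [Ring R] [AddCommGroup M] [Module R M] {v : ι → M}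

theorem LinearIndependent.isCompl_span_image_compl (hli : LinearIndependent R v)
    (hspan : span R (Set.range v) = ⊤) (s : Set ι) :
    IsCompl (span R (v '' sᶜ)) (span R (v '' s)) := by
  refine ⟨hli.disjoint_span_image disjoint_compl_left, ?_⟩
  rw [codisjoint_iff, ← span_union, ← Set.image_union, Set.compl_union_self, Set.image_univ,
    hspan]

theorem LinearMap.apply_mem_span_image_of_forall {f : M →ₗ[R] M} {s : Set ι}
    (h : ∀ k ∈ s, f (v k) ∈ span R (v '' s)) :
    ∀ u ∈ span R (v '' s), f u ∈ span R (v '' s) := fun _ hu =>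
  (map_span_le f _ _).2 (by rintro _ ⟨k, hk, rfl⟩; exact h k hk) ⟨_, hu, rfl⟩

theorem LinearMap.apply_eq_zero_of_mem_span_image {f : M →ₗ[R] M} {s : Set ι}
    (h : ∀ k ∈ s, f (v k) = 0) : ∀ u ∈ span R (v '' s), f u = 0 := fun _ hu =>
  eqOn_span' (f := f) (g := 0) (by rintro _ ⟨k, hk, rfl⟩; exact h k hk) hu

end SpanImage

theorem neg_one_zpow_eq_of_even_sub {K : Type*} [DivisionRing K] {a c : ℤ}
    (h : Even (a - c)) : (-1 : K) ^ a = (-1) ^ c := by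
  rw [← Int.cast_negOnePow, ← Int.cast_negOnePow, (Int.negOnePow_eq_iff a c).2 h]

theorem even_mul_sub_mul_of_even_add {m k : ℤ × ℤ} (h : Even (m + k).1 ∧ Even (m + k).2) :
    Even (m.2 * k.1 - m.1 * k.2) := by
  obtain ⟨⟨e₁, he₁⟩, ⟨e₂, he₂⟩⟩ := h
  simp only [Prod.fst_add, Prod.snd_add] at he₁ he₂
  exact ⟨m.2 * e₁ - m.1 * e₂, by linear_combination m.2 * he₁ - m.1 * he₂⟩

theorem even_mul_sub_mul_of_even_right (m : ℤ × ℤ) {k : ℤ × ℤ} (h : Even k.1 ∧ Even k.2) :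
    Even (m.2 * k.1 - m.1 * k.2) :=
  (h.1.mul_left _).sub (h.2.mul_left _)

section Module

variable {V : Type*} [AddCommGroup V] [Module ℂ V] {v : ℤ × ℤ → V} {X : ℤ × ℤ → Module.End ℂ V}

theorem x_apply_mem_span_odd
    (hX : ∀ m k : ℤ × ℤ, ¬((2 : ℤ) ∣ m.1 ∧ (2 : ℤ) ∣ m.2) →
      X m (v k) = ((-1 : ℂ) ^ (m.2 * k.1) - (-1 : ℂ) ^ (m.1 * k.2)) • v (m + k))
    {m : ℤ × ℤ} (hm : ¬((2 : ℤ) ∣ m.1 ∧ (2 : ℤ) ∣ m.2)) (k : ℤ × ℤ) :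
    X m (v k) ∈ span ℂ (v '' {k : ℤ × ℤ | ¬((2 : ℤ) ∣ k.1 ∧ (2 : ℤ) ∣ k.2)}) := by
  rw [hX m k hm]
  by_cases hmk : (2 : ℤ) ∣ (m + k).1 ∧ (2 : ℤ) ∣ (m + k).2
  · simp only [← even_iff_two_dvd] at hmk
    rw [neg_one_zpow_eq_of_even_sub (even_mul_sub_mul_of_even_add hmk), sub_self, zero_smul]
    exact zero_mem _
  · exact smul_mem _ _ (subset_span ⟨m + k, hmk, rfl⟩)

theorem x_apply_eq_zero_of_even
    (hX : ∀ m k : ℤ × ℤ, ¬((2 : ℤ) ∣ m.1 ∧ (2 : ℤ) ∣ m.2) →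
      X m (v k) = ((-1 : ℂ) ^ (m.2 * k.1) - (-1 : ℂ) ^ (m.1 * k.2)) • v (m + k))
    {m : ℤ × ℤ} (hm : ¬((2 : ℤ) ∣ m.1 ∧ (2 : ℤ) ∣ m.2)) {k : ℤ × ℤ}
    (hk : (2 : ℤ) ∣ k.1 ∧ (2 : ℤ) ∣ k.2) : X m (v k) = 0 := by
  simp only [← even_iff_two_dvd] at hk
  rw [hX m k hm, neg_one_zpow_eq_of_even_sub (even_mul_sub_mul_of_even_right m hk), sub_self,
    zero_smul]

end Module

/-- For `N = 2`, `q = −1`: the module `A_{1,α,b}` (with basis `v_k`, `k ∈ ℤ²`,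
`x^m v_k = ((−1)^(m₂k₁) − (−1)^(m₁k₂)) v_(m+k)` for `m ∈ ℤ² \ 2ℤ²`, and
`(x^n∂) v_k = ⟨∂, α+k+bn⟩ v_(n+k)` for `n ∈ 2ℤ²`) decomposes as the direct sum of the
two submodules `A' = span{v_k : k ∉ 2ℤ²}` and `A'' = span{v_k : k ∈ 2ℤ²}`, and every
`x^m` with `m ∉ 2ℤ²` acts as zero on `A''`. -/
theorem stmt_6 (α : ℂ × ℂ) (b : ℂ)
    (V : Type*) [AddCommGroup V] [Module ℂ V] (v : ℤ × ℤ → V)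
    (hli : LinearIndependent ℂ v)
    (hspan : Submodule.span ℂ (Set.range v) = ⊤)
    (X : ℤ × ℤ → Module.End ℂ V) (T : ℤ × ℤ → ℂ × ℂ → Module.End ℂ V)
    (hX : ∀ m k : ℤ × ℤ, ¬((2 : ℤ) ∣ m.1 ∧ (2 : ℤ) ∣ m.2) →
      X m (v k) = ((-1 : ℂ) ^ (m.2 * k.1) - (-1 : ℂ) ^ (m.1 * k.2)) • v (m + k))
    (hT : ∀ n k : ℤ × ℤ, (2 : ℤ) ∣ n.1 → (2 : ℤ) ∣ n.2 → ∀ d : ℂ × ℂ,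
      T n d (v k) =
        (d.1 * (α.1 + (k.1 : ℂ) + b * (n.1 : ℂ)) + d.2 * (α.2 + (k.2 : ℂ) + b * (n.2 : ℂ)))
          • v (n + k)) :
    IsCompl
        (Submodule.span ℂ (v '' {k : ℤ × ℤ | ¬((2 : ℤ) ∣ k.1 ∧ (2 : ℤ) ∣ k.2)}))
        (Submodule.span ℂ (v '' {k : ℤ × ℤ | (2 : ℤ) ∣ k.1 ∧ (2 : ℤ) ∣ k.2})) ∧
      (∀ m : ℤ × ℤ, ¬((2 : ℤ) ∣ m.1 ∧ (2 : ℤ) ∣ m.2) →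
        ∀ u ∈ Submodule.span ℂ (v '' {k : ℤ × ℤ | ¬((2 : ℤ) ∣ k.1 ∧ (2 : ℤ) ∣ k.2)}),
          X m u ∈ Submodule.span ℂ (v '' {k : ℤ × ℤ | ¬((2 : ℤ) ∣ k.1 ∧ (2 : ℤ) ∣ k.2)})) ∧
      (∀ n : ℤ × ℤ, (2 : ℤ) ∣ n.1 → (2 : ℤ) ∣ n.2 → ∀ d : ℂ × ℂ,
        ∀ u ∈ Submodule.span ℂ (v '' {k : ℤ × ℤ | ¬((2 : ℤ) ∣ k.1 ∧ (2 : ℤ) ∣ k.2)}),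
          T n d u ∈ Submodule.span ℂ (v '' {k : ℤ × ℤ | ¬((2 : ℤ) ∣ k.1 ∧ (2 : ℤ) ∣ k.2)})) ∧
      (∀ n : ℤ × ℤ, (2 : ℤ) ∣ n.1 → (2 : ℤ) ∣ n.2 → ∀ d : ℂ × ℂ,
        ∀ u ∈ Submodule.span ℂ (v '' {k : ℤ × ℤ | (2 : ℤ) ∣ k.1 ∧ (2 : ℤ) ∣ k.2}),
          T n d u ∈ Submodule.span ℂ (v '' {k : ℤ × ℤ | (2 : ℤ) ∣ k.1 ∧ (2 : ℤ) ∣ k.2})) ∧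
      (∀ m : ℤ × ℤ, ¬((2 : ℤ) ∣ m.1 ∧ (2 : ℤ) ∣ m.2) →
        ∀ u ∈ Submodule.span ℂ (v '' {k : ℤ × ℤ | (2 : ℤ) ∣ k.1 ∧ (2 : ℤ) ∣ k.2}),
          X m u = 0) := by
  refine ⟨hli.isCompl_span_image_compl hspan {k | (2 : ℤ) ∣ k.1 ∧ (2 : ℤ) ∣ k.2},
    fun m hm => (X m).apply_mem_span_image_of_forall fun k _ => x_apply_mem_span_odd hX hm k,
    fun n hn₁ hn₂ d => (T n d).apply_mem_span_image_of_forall fun k hk => ?_,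
    fun n hn₁ hn₂ d => (T n d).apply_mem_span_image_of_forall fun k hk => ?_,
    fun m hm => (X m).apply_eq_zero_of_mem_span_image fun k hk => x_apply_eq_zero_of_even hX hm hk⟩
  · rw [hT n k hn₁ hn₂ d]
    refine smul_mem _ _ (subset_span ⟨n + k, fun hnk => hk ⟨?_, ?_⟩, rfl⟩)
    exacts [(dvd_add_right hn₁).1 hnk.1, (dvd_add_right hn₂).1 hnk.2]
  · rw [hT n k hn₁ hn₂ d]
    exact smul_mem _ _ (subset_span ⟨n + k, ⟨dvd_add hn₁ hk.1, dvd_add hn₂ hk.2⟩, rfl⟩)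
end

section
/- Let N = 2, α ∈ C^2, b ∈ C. The submodule A''_{1,α,b} = span{v_k : k ∈ 2Z^2} of A_{1,α,b}, regarded as a module over the rank-2 Witt algebra W, is irreducible if and only if α ∉ 2Z^2 or b ∉ {0,1}. -/
/-!
The operators `x^0 ∂` act diagonally on the basis `w_k` with eigenvalues `⟨∂, α + 2k⟩`, and for
`∂ = ∂₁ + i ∂₂` these eigenvalues are pairwise distinct, so every nonzero invariant subspace
contains some `w_k`. From `w_k` the action reaches `w_m` as soon as `α + 2k + 2b(m - k) ≠ 0`,
and unless `α ∈ 2ℤ²` and `b ∈ {0, 1}` any two basis vectors are joined by a two-step path of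
such moves. Conversely, for `α = 2p` the line `ℂ w_{-p}` (when `b = 0`) and the span of the
`w_k` with `k ≠ -p` (when `b = 1`) are proper nonzero invariant subspaces.
-/

open Polynomial Submodule Set

theorem Module.End.aeval_apply_mem_of_forall_mem {R M : Type*} [CommSemiring R]
    [AddCommMonoid M] [Module R M] {f : Module.End R M} {U : Submodule R M}
    (hU : ∀ u ∈ U, f u ∈ U) (p : R[X]) {u : M} (hu : u ∈ U) : aeval f p u ∈ U := by
  induction p using Polynomial.induction_on with
  | C a => simpa [Module.algebraMap_end_apply] using U.smul_mem a hu
  | add p q hp hq => simpa using U.add_mem hp hq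
  | monomial n a h =>
    rw [show C a * X ^ (n + 1) = X * (C a * X ^ n) by ring, map_mul, aeval_X,
      Module.End.mul_apply]
    exact hU _ h

/-- Lagrange interpolation in the eigenvalues projects onto a single eigenvector. -/
theorem Submodule.exists_mem_of_injective_eigenvalues {K V ι : Type*} [Field K]
    [AddCommGroup V] [Module K V] {w : ι → V} {f : Module.End K V} {μ : ι → K}
    (hμ : Function.Injective μ) (hf : ∀ i, f (w i) = μ i • w i)
    {U : Submodule K V} (hU : ∀ u ∈ U, f u ∈ U) (hUw : U ≤ span K (range w)) (hne : U ≠ ⊥) :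
    ∃ i, w i ∈ U := by
  classical
  obtain ⟨u, huU, hu0⟩ := (Submodule.ne_bot_iff U).mp hne
  obtain ⟨c, rfl⟩ := Finsupp.mem_span_range_iff_exists_finsupp.mp (hUw huU)
  obtain ⟨i, hi⟩ : c.support.Nonempty :=
    Finset.nonempty_iff_ne_empty.mpr fun h => hu0 (by simp [Finsupp.support_eq_empty.mp h])
  set p : K[X] := ∏ j ∈ c.support.erase i, (X - C (μ j))
  have hp : aeval f p (c.sum fun j a => a • w j) = (c i * p.eval (μ i)) • w i := by
    rw [Finsupp.sum, map_sum, Finset.sum_eq_single i]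
    · rw [map_smul, Module.End.aeval_apply_of_mem_apply_eq_smul (hf i), smul_smul]
    · intro j hj hji
      rw [map_smul, Module.End.aeval_apply_of_mem_apply_eq_smul (hf j), eval_prod,
        Finset.prod_eq_zero (Finset.mem_erase.mpr ⟨hji, hj⟩) (by simp), zero_smul, smul_zero]
    · exact fun h => (h hi).elim
  have hpi : c i * p.eval (μ i) ≠ 0 := by
    refine mul_ne_zero (Finsupp.mem_support_iff.mp hi) ?_
    rw [eval_prod, Finset.prod_ne_zero_iff]
    intro j hj
    simpa [sub_eq_zero] using hμ.ne (Finset.ne_of_mem_erase hj).symm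
  refine ⟨i, (U.smul_mem_iff hpi).mp ?_⟩
  rw [← hp]
  exact Module.End.aeval_apply_mem_of_forall_mem hU p huU

theorem exists_int_add_mul_ne_zero {K : Type*} [Field K] [CharZero K] {x y a c : K}
    (ha : a ≠ 0) (hc : c ≠ 0) : ∃ t : ℤ, x + a * t ≠ 0 ∧ y + c * t ≠ 0 := by
  have roots_subsingleton : ∀ {x a : K}, a ≠ 0 → {t : ℤ | x + a * t = 0}.Subsingleton :=
    fun ha s hs t ht => by
      exact_mod_cast mul_left_cancel₀ ha (add_left_cancel (a := _) (hs.trans ht.symm))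
  obtain ⟨t, ht⟩ :=
    ((roots_subsingleton ha).finite.union (roots_subsingleton hc).finite).infinite_compl.nonempty
  simp only [mem_compl_iff, mem_union, not_or] at ht
  exact ⟨t, ht.1, ht.2⟩

theorem LinearIndependent.span_image_ne_bot {K V ι : Type*} [Field K]
    [AddCommGroup V] [Module K V] {w : ι → V} (hli : LinearIndependent K w) {s : Set ι}
    (hs : s.Nonempty) : span K (w '' s) ≠ ⊥ := by
  obtain ⟨i, hi⟩ := hs
  exact (Submodule.ne_bot_iff _).mpr ⟨w i, subset_span (mem_image_of_mem w hi), hli.ne_zero i⟩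

theorem LinearIndependent.span_image_ne_top {K V ι : Type*} [Field K]
    [AddCommGroup V] [Module K V] {w : ι → V} (hli : LinearIndependent K w) {s : Set ι}
    {j : ι} (hj : j ∉ s) : span K (w '' s) ≠ ⊤ :=
  fun h => hli.notMem_span_image hj (h ▸ mem_top)

theorem Complex.intCast_add_intCast_mul_I_injective :
    Function.Injective fun k : ℤ × ℤ => (k.1 : ℂ) + k.2 * I := by
  rintro ⟨a, b⟩ ⟨c, d⟩ h
  simp only [Complex.ext_iff, add_re, add_im, mul_re, mul_im, intCast_re, intCast_im, I_re, I_im,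
    mul_zero, mul_one, sub_self, add_zero, zero_add, Int.cast_inj] at h
  exact Prod.ext h.1 h.2

/-- The vector `α + 2k + 2bn`, so that `x^{2n}∂` maps `w k = v_{2k}` to
`⟨∂, coeffVec α b k n⟩ w (n + k)`. -/
def coeffVec (α : ℂ × ℂ) (b : ℂ) (k n : ℤ × ℤ) : ℂ × ℂ :=
  (α.1 + 2 * k.1 + 2 * b * n.1, α.2 + 2 * k.2 + 2 * b * n.2)

theorem coeffVec_ne_zero_of_notMem_two_zsmul {α : ℂ × ℂ}
    (hα : ¬∃ p : ℤ × ℤ, α = (((2 * p.1 : ℤ) : ℂ), ((2 * p.2 : ℤ) : ℂ))) (b : ℂ) (k : ℤ × ℤ) :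
    coeffVec α b k 0 ≠ 0 := by
  intro h
  simp only [coeffVec, Prod.fst_zero, Prod.snd_zero, Int.cast_zero, mul_zero, add_zero,
    Prod.mk_eq_zero] at h
  exact hα ⟨-k, Prod.ext (by simp only [Prod.fst_neg]; push_cast; linear_combination h.1)
    (by simp only [Prod.snd_neg]; push_cast; linear_combination h.2)⟩

theorem exists_coeffVec_ne_zero_path {α : ℂ × ℂ} {b : ℂ}
    (H : (¬∃ p : ℤ × ℤ, α = (((2 * p.1 : ℤ) : ℂ), ((2 * p.2 : ℤ) : ℂ))) ∨ (b ≠ 0 ∧ b ≠ 1))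
    (k m : ℤ × ℤ) : ∃ k', coeffVec α b k (k' - k) ≠ 0 ∧ coeffVec α b k' (m - k') ≠ 0 := by
  by_cases hb0 : b = 0
  · subst hb0
    have hα := coeffVec_ne_zero_of_notMem_two_zsmul (H.resolve_right (by simp)) 0 k
    exact ⟨k, by simpa [coeffVec] using hα, by simpa [coeffVec] using hα⟩
  by_cases hb1 : b = 1
  · subst hb1
    have hα := coeffVec_ne_zero_of_notMem_two_zsmul (H.resolve_right (by simp)) 1
    refine ⟨k, by simpa [coeffVec] using hα k, ?_⟩
    convert hα m using 1
    simp only [coeffVec, Prod.fst_sub, Prod.snd_sub, Prod.fst_zero, Prod.snd_zero]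
    push_cast
    ring_nf
  -- Along the line `k' = (t, 0)` both first coordinates are affine in `t` with nonzero slope.
  obtain ⟨t, h1, h2⟩ := exists_int_add_mul_ne_zero (x := α.1 + 2 * k.1 - 2 * b * k.1)
    (y := α.1 + 2 * b * m.1) (c := 2 - 2 * b) (mul_ne_zero two_ne_zero hb0)
    (fun h => hb1 (by linear_combination -h / 2))
  refine ⟨(t, 0), fun h => h1 ?_, fun h => h2 ?_⟩
  · have h := congrArg Prod.fst h
    simp only [coeffVec, Prod.fst_sub, Prod.fst_zero] at h
    push_cast at h
    linear_combination h
  · have h := congrArg Prod.fst h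
    simp only [coeffVec, Prod.fst_sub, Prod.fst_zero] at h
    push_cast at h
    linear_combination h

section WittModule

variable {α : ℂ × ℂ} {b : ℂ} {V : Type*} [AddCommGroup V] [Module ℂ V] {w : ℤ × ℤ → V}
  {T : ℤ × ℤ → ℂ × ℂ → Module.End ℂ V}
  (hT : ∀ n k : ℤ × ℤ, ∀ d : ℂ × ℂ,
    T n d (w k) = (d.1 * (coeffVec α b k n).1 + d.2 * (coeffVec α b k n).2) • w (n + k))
include hT

theorem mem_of_mem_of_coeffVec_ne_zero {U : Submodule ℂ V}
    (hU : ∀ n : ℤ × ℤ, ∀ d : ℂ × ℂ, ∀ u ∈ U, T n d u ∈ U) {k m : ℤ × ℤ} (hk : w k ∈ U)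
    (hkm : coeffVec α b k (m - k) ≠ 0) : w m ∈ U := by
  set v := coeffVec α b k (m - k)
  obtain ⟨d, hd⟩ : ∃ d : ℂ × ℂ, d.1 * v.1 + d.2 * v.2 ≠ 0 := by
    by_cases hv : v.1 = 0
    · exact ⟨(0, 1), by simpa using fun h2 => hkm (Prod.ext hv h2)⟩
    · exact ⟨(1, 0), by simpa using hv⟩
  have := hU (m - k) d (w k) hk
  rwa [hT, sub_add_cancel, U.smul_mem_iff hd] at this

theorem eq_top_of_invariant (hspan : span ℂ (range w) = ⊤)
    (H : (¬∃ p : ℤ × ℤ, α = (((2 * p.1 : ℤ) : ℂ), ((2 * p.2 : ℤ) : ℂ))) ∨ (b ≠ 0 ∧ b ≠ 1))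
    {U : Submodule ℂ V} (hU : ∀ n : ℤ × ℤ, ∀ d : ℂ × ℂ, ∀ u ∈ U, T n d u ∈ U) (hne : U ≠ ⊥) :
    U = ⊤ := by
  -- `T 0 (1, Complex.I)` is diagonal in the basis `w` with pairwise distinct eigenvalues.
  set μ : ℤ × ℤ → ℂ := fun k => α.1 + Complex.I * α.2 + 2 * ((k.1 : ℂ) + k.2 * Complex.I)
  have hμ : Function.Injective μ := fun k k' h =>
    Complex.intCast_add_intCast_mul_I_injective (by linear_combination h / 2)
  have hdiag : ∀ k, T 0 (1, Complex.I) (w k) = μ k • w k := fun k => by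
    rw [hT, zero_add]
    simp only [coeffVec, μ, Prod.fst_zero, Prod.snd_zero, Int.cast_zero]
    ring_nf
  obtain ⟨k, hk⟩ := exists_mem_of_injective_eigenvalues hμ hdiag (hU 0 (1, Complex.I))
    (hspan ▸ le_top) hne
  rw [eq_top_iff, ← hspan, span_le]
  rintro _ ⟨m, rfl⟩
  obtain ⟨k', hkk', hk'm⟩ := exists_coeffVec_ne_zero_path H k m
  exact mem_of_mem_of_coeffVec_ne_zero hT hU (mem_of_mem_of_coeffVec_ne_zero hT hU hk hkk') hk'm

theorem span_image_invariant {s : Set (ℤ × ℤ)}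
    (hs : ∀ n k : ℤ × ℤ, k ∈ s → n + k ∉ s → coeffVec α b k n = 0) (n : ℤ × ℤ) (d : ℂ × ℂ) :
    ∀ u ∈ span ℂ (w '' s), T n d u ∈ span ℂ (w '' s) := by
  refine fun u hu => (span_le.mpr ?_ : span ℂ (w '' s) ≤ (span ℂ (w '' s)).comap (T n d)) hu
  rintro _ ⟨k, hk, rfl⟩
  rw [SetLike.mem_coe, mem_comap, hT]
  by_cases hnk : n + k ∈ s
  · exact smul_mem _ _ (subset_span (mem_image_of_mem w hnk))
  · simp [hs n k hk hnk]

end WittModule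

theorem exists_reducing_set (p : ℤ × ℤ) {b : ℂ} (hb : b = 0 ∨ b = 1) :
    ∃ s : Set (ℤ × ℤ), (∀ n k : ℤ × ℤ, k ∈ s → n + k ∉ s →
      coeffVec (((2 * p.1 : ℤ) : ℂ), ((2 * p.2 : ℤ) : ℂ)) b k n = 0) ∧
      s.Nonempty ∧ sᶜ.Nonempty := by
  rcases hb with rfl | rfl
  · refine ⟨{-p}, fun n k hk _ => ?_, singleton_nonempty _, ⟨-p + (1, 0), by simp⟩⟩
    rw [mem_singleton_iff] at hk
    subst hk
    simp only [coeffVec, Prod.fst_neg, Prod.snd_neg]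
    push_cast
    ext <;> simp
  · refine ⟨{-p}ᶜ, fun n k _ hnk => ?_, ⟨-p + (1, 0), by simp⟩, by simp⟩
    rw [notMem_compl_iff, mem_singleton_iff, Prod.ext_iff] at hnk
    obtain ⟨h1, h2⟩ := hnk
    simp only [Prod.fst_add, Prod.snd_add, Prod.fst_neg, Prod.snd_neg] at h1 h2
    have h1 : (n.1 + k.1 : ℂ) = -p.1 := by exact_mod_cast h1
    have h2 : (n.2 + k.2 : ℂ) = -p.2 := by exact_mod_cast h2
    simp only [coeffVec, Prod.mk_eq_zero]
    push_cast
    exact ⟨by linear_combination 2 * h1, by linear_combination 2 * h2⟩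

/-- For `N = 2`: the module `A''_{1,α,b} = span{v_k : k ∈ 2ℤ²}` over the rank-2 Witt
algebra `W` (basis vectors indexed here by `w k := v_{2k}`, action
`(x^(2n)∂) w_k = ⟨∂, α + 2k + 2bn⟩ w_(n+k)`) is irreducible if and only if
`α ∉ 2ℤ²` or `b ∉ {0,1}`. -/
theorem stmt_9 (α : ℂ × ℂ) (b : ℂ)
    (V : Type*) [AddCommGroup V] [Module ℂ V] (w : ℤ × ℤ → V)
    (hli : LinearIndependent ℂ w)
    (hspan : Submodule.span ℂ (Set.range w) = ⊤)
    (T : ℤ × ℤ → ℂ × ℂ → Module.End ℂ V)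
    (hT : ∀ n k : ℤ × ℤ, ∀ d : ℂ × ℂ,
      T n d (w k) =
        (d.1 * (α.1 + 2 * (k.1 : ℂ) + 2 * b * (n.1 : ℂ)) +
          d.2 * (α.2 + 2 * (k.2 : ℂ) + 2 * b * (n.2 : ℂ))) • w (n + k)) :
    (∀ U : Submodule ℂ V,
        (∀ n : ℤ × ℤ, ∀ d : ℂ × ℂ, ∀ u ∈ U, T n d u ∈ U) → U = ⊥ ∨ U = ⊤) ↔
      ((¬∃ p : ℤ × ℤ, α = (((2 * p.1 : ℤ) : ℂ), ((2 * p.2 : ℤ) : ℂ))) ∨ (b ≠ 0 ∧ b ≠ 1)) := by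
  constructor
  · intro hirr
    by_contra hred
    push Not at hred
    obtain ⟨⟨p, rfl⟩, hb⟩ := hred
    obtain ⟨s, hs, hs_ne, j, hj⟩ := exists_reducing_set p (or_iff_not_imp_left.mpr hb)
    rcases hirr _ (span_image_invariant hT hs) with h | h
    exacts [hli.span_image_ne_bot hs_ne h, hli.span_image_ne_top hj h]
  · exact fun H U hU => or_iff_not_imp_left.mpr (eq_top_of_invariant hT hspan H hU)
end

section
/- Suppose coefficients c: N·Z^2 → C satisfy, for all k, n ∈ N·Z^2, the relation (A + n' + b·k')(c(n) − c(k+n)) = 0, where for λ ∈ N·Z^2 we write λ' = ⟨∂', λ⟩ for a fixed nonzero linear functional ∂' on Z^2 extended to C^2, A ∈ C is a fixed constant, and b ∈ C. Then c is constant: c(n) = c(k+n) for all k, n ∈ N·Z^2. -/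
/-!
If `b ≠ 1`, pick `m` with `A + φ n + (1 - b) φ m` and `A + φ n + b φ k + (1 - b) φ m` both
nonzero; the relation applied at the base point `m + n` with shifts `-m` and `k - m` gives
`c n = c (m + n) = c (k + n)`. If `b = 1`, the factor is `A + φ (k + n)`, so `c n = c m` for any
`m` with `A + φ m ≠ 0`, and such an `m` exists. Both choices are possible because a nonzero
additive functional with values in a field of characteristic zero has infinite range.
-/

section

variable {G K : Type*} [AddCommGroup G] [DivisionRing K] [CharZero K]

theorem AddMonoidHom.infinite_range_of_ne_zero {φ : G →+ K} (hφ : φ ≠ 0) :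
    (Set.range φ).Infinite := by
  obtain ⟨j, hj⟩ := DFunLike.ne_iff.mp hφ
  exact Set.infinite_of_injective_forall_mem (smul_left_injective ℤ hj)
    fun t => ⟨t • j, map_zsmul φ t j⟩

theorem AddMonoidHom.exists_mul_apply_notMem {φ : G →+ K} (hφ : φ ≠ 0) {a : K} (ha : a ≠ 0)
    {s : Set K} (hs : s.Finite) : ∃ m, a * φ m ∉ s := by
  have hinf := (infinite_range_of_ne_zero hφ).image (mul_right_injective₀ ha).injOn
  obtain ⟨_, ⟨_, ⟨m, rfl⟩, rfl⟩, hm⟩ := hinf.exists_notMem_finite hs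
  exact ⟨m, hm⟩

end

section

variable {G K : Type*} [AddCommGroup G] [Field K] [CharZero K] {φ : G →+ K} {A b : K}
  {c : G → K}

theorem forall_eq_add_of_step_of_ne_one (hφ : φ ≠ 0) (hb : b ≠ 1)
    (hstep : ∀ k n, A + φ n + b * φ k ≠ 0 → c n = c (k + n)) (k n : G) :
    c n = c (k + n) := by
  obtain ⟨m, hm⟩ := φ.exists_mul_apply_notMem hφ (sub_ne_zero.mpr hb.symm)
    (s := {-(A + φ n), -(A + φ n + b * φ k)}) (Set.toFinite _)
  simp only [Set.mem_insert_iff, Set.mem_singleton_iff, not_or] at hm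
  have back : c (m + n) = c n := by
    have := hstep (-m) (m + n) fun h =>
      hm.1 (by rw [map_add, map_neg] at h; linear_combination h)
    rwa [neg_add_cancel_left] at this
  have forth : c (m + n) = c (k + n) := by
    have := hstep (k - m) (m + n) fun h =>
      hm.2 (by rw [map_add, map_sub] at h; linear_combination h)
    rwa [show k - m + (m + n) = k + n by abel] at this
  exact back.symm.trans forth

theorem forall_eq_add_of_step_of_eq_one (hφ : φ ≠ 0)
    (hstep : ∀ k n, A + φ n + 1 * φ k ≠ 0 → c n = c (k + n)) (k n : G) :
    c n = c (k + n) := by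
  obtain ⟨m, hm⟩ := φ.exists_mul_apply_notMem hφ one_ne_zero (Set.finite_singleton (-A))
  have to_m (p : G) : c p = c m := by
    have := hstep (m - p) p fun h =>
      hm <| Set.mem_singleton_iff.mpr (by rw [map_sub] at h; linear_combination h)
    rwa [sub_add_cancel] at this
  rw [to_m n, to_m (k + n)]

theorem forall_eq_add_of_step (hφ : φ ≠ 0)
    (hstep : ∀ k n, A + φ n + b * φ k ≠ 0 → c n = c (k + n)) (k n : G) :
    c n = c (k + n) := by
  rcases eq_or_ne b 1 with rfl | hb
  · exact forall_eq_add_of_step_of_eq_one hφ hstep k n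
  · exact forall_eq_add_of_step_of_ne_one hφ hb hstep k n

end

/-- Relation (2.9) implies (2.10): if coefficients `c : N·ℤ² → ℂ` (indexed here by
`n ↦ c n` for the lattice point `N·n`) satisfy
`(A + ⟨∂', N·n⟩ + b⟨∂', N·k⟩)(c n − c (k+n)) = 0` for all `k, n`, where `∂' ≠ 0` is a
linear functional, then `c` is constant: `c n = c (k+n)` for all `k, n`. -/
theorem stmt_10 (N : ℕ) (hN : 2 ≤ N) (d : ℂ × ℂ) (hd : d ≠ 0)
    (A b : ℂ) (c : ℤ × ℤ → ℂ)
    (h : ∀ k n : ℤ × ℤ,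
      (A + (d.1 * ((N : ℂ) * (n.1 : ℂ)) + d.2 * ((N : ℂ) * (n.2 : ℂ)))
          + b * (d.1 * ((N : ℂ) * (k.1 : ℂ)) + d.2 * ((N : ℂ) * (k.2 : ℂ))))
        * (c n - c (k + n)) = 0) :
    ∀ k n : ℤ × ℤ, c n = c (k + n) := by
  let φ : ℤ × ℤ →+ ℂ := AddMonoidHom.mk' (fun m => d.1 * (N * m.1) + d.2 * (N * m.2))
    fun x y => by simp only [Prod.fst_add, Prod.snd_add, Int.cast_add]; ring
  have hNne : (N : ℂ) ≠ 0 := Nat.cast_ne_zero.mpr (by omega)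
  have hφ : φ ≠ 0 := by
    intro hφ0
    have h₁ : d.1 * N = 0 := by simpa [φ] using DFunLike.congr_fun hφ0 (1, 0)
    have h₂ : d.2 * N = 0 := by simpa [φ] using DFunLike.congr_fun hφ0 (0, 1)
    exact hd (Prod.ext (by simpa [hNne] using h₁) (by simpa [hNne] using h₂))
  exact forall_eq_add_of_step hφ fun k n hne =>
    sub_eq_zero.mp ((mul_eq_zero.mp (h k n)).resolve_left hne)
end

section
/- (Lemma 2.1(i), case b_i = b_{i+m}.) Suppose c : (Z^2/NZ^2) × Z^2 → C and b ∈ C satisfy, for all k, n ∈ N·Z^2 and all ∂ ∈ C∂_1 ⊕ C∂_2: ⟨∂, m⟩ c(k+m, i+n) = ⟨∂, α+i+m+n+b·k⟩ c(m, i+n) − ⟨∂, α+i+n+b·k⟩ c(m, i+k+n), where m ∈ Z^2 \ N·Z^2 and i ∈ Z^2 are fixed, α ∈ C^2. Then c(m+k, i+n) = c(m, i) for all k, n ∈ N·Z^2. -/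
/-!
Pairing (2.7) with `∂' = m₂∂₁ - m₁∂₂`, which is orthogonal to `m`, gives
`L(x, y) · (c(m, i + Nx) - c(m, i + Ny)) = 0` for an affine expression `L`. Whenever
`c(m, i + Nx) ≠ c(m, i + Ny)`, both `L(x, y)` and `L(y, x)` vanish, so `f x + f y` takes a fixed
value, where `f = N ⟨∂', ·⟩` is a nonzero linear form on `ℤ²`. If `c(m, i + N·)` took different
values at `s` and `t`, then every `r` would satisfy `f r ∈ {f s, f t}`, which is impossible since
`f` has infinite range. So `c(m, i + N·)` is constant, and pairing (2.7) with `∂ = m₁∂₁ + m₂∂₂`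
leaves `|m|² c(m + Nk, i + Nn) = |m|² c(m, i)`.
-/

theorem eq_of_forall_ne_imp_add_eq {X β G : Type*} [AddCancelCommMonoid G] {c : X → β}
    {F : X → G} {σ : G} (hF : ∀ x y, c x ≠ c y → F x + F y = σ)
    (hF_inf : (Set.range F).Infinite) (x y : X) : c x = c y := by
  by_contra hxy
  obtain ⟨_, ⟨r, rfl⟩, hr⟩ := hF_inf.exists_notMem_finite (Set.toFinite {F x, F y})
  simp only [Set.mem_insert_iff, Set.mem_singleton_iff, not_or] at hr
  by_cases hrx : c r = c x
  · have hry : c r ≠ c y := hrx ▸ hxy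
    exact hr.1 (add_right_cancel ((hF r y hry).trans (hF x y hxy).symm))
  · exact hr.2 (add_right_cancel ((hF r x hrx).trans (add_comm (F y) _ ▸ hF x y hxy).symm))

theorem intCast_mul_self_add_mul_self_ne_zero {m : ℤ × ℤ} (hm : m ≠ 0) :
    (m.1 : ℂ) * m.1 + m.2 * m.2 ≠ 0 := by
  have hm2 : m.1 * m.1 + m.2 * m.2 ≠ 0 := by
    rw [Ne, mul_self_add_mul_self_eq_zero]
    exact fun h ↦ hm (Prod.ext h.1 h.2)
  exact_mod_cast hm2

theorem infinite_range_mul_perp {m : ℤ × ℤ} (hm : m ≠ 0) {a : ℂ} (ha : a ≠ 0) :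
    (Set.range fun x : ℤ × ℤ ↦ a * (m.2 * x.1 - m.1 * x.2)).Infinite := by
  -- on the line `ℤ • (m₂, -m₁)` the form is `j ↦ j a |m|²`
  have hinj : Function.Injective fun j : ℤ ↦ a * (m.2 * (j * m.2) - m.1 * (j * -m.1)) := by
    intro j j' hjj
    have hjj' : (j : ℂ) = j' :=
      mul_right_cancel₀ (mul_ne_zero ha (intCast_mul_self_add_mul_self_ne_zero hm))
        (by linear_combination hjj)
    exact_mod_cast hjj'
  refine (Set.infinite_range_of_injective hinj).mono ?_
  rintro _ ⟨j, rfl⟩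
  exact ⟨j • (m.2, -m.1), by simp⟩

/-- Equation (2.7) with `b_i = b_{i+m} = b`: the points `k, n ∈ N·ℤ²` are written `N • k, N • n`,
and `∂ = d.1 ∂₁ + d.2 ∂₂`. -/
def CoeffRelation (N : ℕ) (α : ℂ × ℂ) (i m : ℤ × ℤ) (b : ℂ) (c : ℤ × ℤ → ℤ × ℤ → ℂ) : Prop :=
  ∀ k n : ℤ × ℤ, ∀ d : ℂ × ℂ,
      (d.1 * (m.1 : ℂ) + d.2 * (m.2 : ℂ)) * c ((N : ℤ) • k + m) (i + (N : ℤ) • n) =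
        (d.1 * (α.1 + (i.1 : ℂ) + (m.1 : ℂ) + (N : ℂ) * (n.1 : ℂ) + b * ((N : ℂ) * (k.1 : ℂ)))
          + d.2 * (α.2 + (i.2 : ℂ) + (m.2 : ℂ) + (N : ℂ) * (n.2 : ℂ) + b * ((N : ℂ) * (k.2 : ℂ))))
            * c m (i + (N : ℤ) • n)
        - (d.1 * (α.1 + (i.1 : ℂ) + (N : ℂ) * (n.1 : ℂ) + b * ((N : ℂ) * (k.1 : ℂ)))
          + d.2 * (α.2 + (i.2 : ℂ) + (N : ℂ) * (n.2 : ℂ) + b * ((N : ℂ) * (k.2 : ℂ))))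
            * c m (i + (N : ℤ) • k + (N : ℤ) • n)

namespace CoeffRelation

variable {N : ℕ} {α : ℂ × ℂ} {i m : ℤ × ℤ} {b : ℂ} {c : ℤ × ℤ → ℤ × ℤ → ℂ}

theorem mul_sub_eq_zero (h : CoeffRelation N α i m b c) (x y : ℤ × ℤ) :
    (m.2 * (α.1 + i.1) - m.1 * (α.2 + i.2) +
        N * ((1 - b) * (m.2 * x.1 - m.1 * x.2) + b * (m.2 * y.1 - m.1 * y.2))) *
      (c m (i + (N : ℤ) • x) - c m (i + (N : ℤ) • y)) = 0 := by
  have h' := h (y - x) x (m.2, -m.1)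
  rw [smul_sub, add_sub_assoc', sub_add_cancel] at h'
  push_cast [Prod.fst_sub, Prod.snd_sub] at h'
  linear_combination -h'

theorem add_eq_of_ne (h : CoeffRelation N α i m b c) {x y : ℤ × ℤ}
    (hxy : c m (i + (N : ℤ) • x) ≠ c m (i + (N : ℤ) • y)) :
    N * (m.2 * x.1 - m.1 * x.2 : ℂ) + N * (m.2 * y.1 - m.1 * y.2) =
      -2 * (m.2 * (α.1 + i.1) - m.1 * (α.2 + i.2)) := by
  have hx := (mul_eq_zero.mp (h.mul_sub_eq_zero x y)).resolve_right (sub_ne_zero.mpr hxy)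
  have hy := (mul_eq_zero.mp (h.mul_sub_eq_zero y x)).resolve_right (sub_ne_zero.mpr hxy.symm)
  linear_combination hx + hy

theorem apply_smul_eq (h : CoeffRelation N α i m b c) (hN : N ≠ 0) (hm : m ≠ 0) (x y : ℤ × ℤ) :
    c m (i + (N : ℤ) • x) = c m (i + (N : ℤ) • y) :=
  eq_of_forall_ne_imp_add_eq (fun _ _ ↦ h.add_eq_of_ne)
    (infinite_range_mul_perp hm (Nat.cast_ne_zero.mpr hN)) x y

theorem apply_add_smul_eq (h : CoeffRelation N α i m b c) (hN : N ≠ 0) (hm : m ≠ 0)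
    (k n : ℤ × ℤ) : c (m + (N : ℤ) • k) (i + (N : ℤ) • n) = c m i := by
  have hn : c m (i + (N : ℤ) • n) = c m i := by
    simpa using h.apply_smul_eq hN hm n 0
  have hkn : c m (i + (N : ℤ) • k + (N : ℤ) • n) = c m i := by
    simpa [add_assoc, smul_add] using h.apply_smul_eq hN hm (k + n) 0
  have h' := h k n (m.1, m.2)
  rw [hn, hkn, add_comm (_ • k)] at h'
  exact mul_left_cancel₀ (intCast_mul_self_add_mul_self_ne_zero hm) (by linear_combination h')

end CoeffRelation

theorem stmt_13_general (N : ℕ) (hN : 2 ≤ N) (α : ℂ × ℂ)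
    (i m : ℤ × ℤ) (hm : ¬((N : ℤ) ∣ m.1 ∧ (N : ℤ) ∣ m.2)) (b : ℂ)
    (c : ℤ × ℤ → ℤ × ℤ → ℂ)
    (h : ∀ k n : ℤ × ℤ, ∀ d : ℂ × ℂ,
      (d.1 * (m.1 : ℂ) + d.2 * (m.2 : ℂ)) * c ((N : ℤ) • k + m) (i + (N : ℤ) • n) =
        (d.1 * (α.1 + (i.1 : ℂ) + (m.1 : ℂ) + (N : ℂ) * (n.1 : ℂ) + b * ((N : ℂ) * (k.1 : ℂ)))
          + d.2 * (α.2 + (i.2 : ℂ) + (m.2 : ℂ) + (N : ℂ) * (n.2 : ℂ) + b * ((N : ℂ) * (k.2 : ℂ))))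
            * c m (i + (N : ℤ) • n)
        - (d.1 * (α.1 + (i.1 : ℂ) + (N : ℂ) * (n.1 : ℂ) + b * ((N : ℂ) * (k.1 : ℂ)))
          + d.2 * (α.2 + (i.2 : ℂ) + (N : ℂ) * (n.2 : ℂ) + b * ((N : ℂ) * (k.2 : ℂ))))
            * c m (i + (N : ℤ) • k + (N : ℤ) • n)) :
    ∀ k n : ℤ × ℤ, c (m + (N : ℤ) • k) (i + (N : ℤ) • n) = c m i := by
  have hm0 : m ≠ 0 := by
    rintro rfl
    exact hm ⟨dvd_zero _, dvd_zero _⟩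
  exact CoeffRelation.apply_add_smul_eq h (by omega) hm0

/-- Lemma 2.1(i), case `b_i = b_{i+m}`: if the coefficients `c` satisfy equation (2.7)
with `b_i = b_{i+m} = b` for all `k, n ∈ N·ℤ²` and all `∂`, then
`c(m+k, i+n) = c(m, i)` for all `k, n ∈ N·ℤ²`. (Here `α ∉ ℤ²` guarantees all the
relevant weights are nonzero.) -/
theorem stmt_13 (N : ℕ) (hN : 2 ≤ N) (α : ℂ × ℂ)
    (hα : ∀ p : ℤ × ℤ, α ≠ (((p.1 : ℤ) : ℂ), ((p.2 : ℤ) : ℂ)))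
    (i m : ℤ × ℤ) (hm : ¬((N : ℤ) ∣ m.1 ∧ (N : ℤ) ∣ m.2)) (b : ℂ)
    (c : ℤ × ℤ → ℤ × ℤ → ℂ)
    (h : ∀ k n : ℤ × ℤ, ∀ d : ℂ × ℂ,
      (d.1 * (m.1 : ℂ) + d.2 * (m.2 : ℂ)) * c ((N : ℤ) • k + m) (i + (N : ℤ) • n) =
        (d.1 * (α.1 + (i.1 : ℂ) + (m.1 : ℂ) + (N : ℂ) * (n.1 : ℂ) + b * ((N : ℂ) * (k.1 : ℂ)))
          + d.2 * (α.2 + (i.2 : ℂ) + (m.2 : ℂ) + (N : ℂ) * (n.2 : ℂ) + b * ((N : ℂ) * (k.2 : ℂ))))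
            * c m (i + (N : ℤ) • n)
        - (d.1 * (α.1 + (i.1 : ℂ) + (N : ℂ) * (n.1 : ℂ) + b * ((N : ℂ) * (k.1 : ℂ)))
          + d.2 * (α.2 + (i.2 : ℂ) + (N : ℂ) * (n.2 : ℂ) + b * ((N : ℂ) * (k.2 : ℂ))))
            * c m (i + (N : ℤ) • k + (N : ℤ) • n)) :
    ∀ k n : ℤ × ℤ, c (m + (N : ℤ) • k) (i + (N : ℤ) • n) = c m i :=
  stmt_13_general N hN α i m hm b c h
end

section
/- Let N = 2, q = −1. Suppose c : (Z^2/2Z^2 \ {0}) × (Z^2/2Z^2) → C satisfies the system c(m, n+k)c(n, k) − c(n, m+k)c(m, k) = ((−1)^{m2 n1} − (−1)^{m1 n2}) c(m+n, k) for all m, n ∈ Z^2/2Z^2 \ {0}, k ∈ Z^2/2Z^2 (with c(m,·) := 0 for m = 0 in Z^2/2Z^2), and the normalization c((1,0),(0,0)) = c((1,0),(0,1)) = c((0,1),(1,0)) = 1. Then c(m,k) = (−1)^{m2 k1} for all m ∈ Z^2/2Z^2 \ {0}, k ∈ Z^2/2Z^2. -/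
/-!
Write `e₁ = (1,0)`, `e₂ = (0,1)`, `e₃ = (1,1)`. For `m ≠ n` both nonzero, `m + n` is the third
nonzero element and the structure constant is `±2`, so the system consists of polynomial
relations among the twelve values `c(eᵢ, k)`. With `t = c(e₃, e₂)`, four relations give
`c(e₃,0)² c(e₁,e₁) = 1` and four give `c(e₃,0) t = 1`; the remaining ones then express every
unknown as a polynomial in `t`, and the relation at `(e₁, e₃, e₃)` becomes `8 t (t - 1) = 0`.
Hence `t = 1`, and all other values follow linearly.
-/

namespace ZModTwoSystem

local notation "e₁" => ((1, 0) : ZMod 2 × ZMod 2)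
local notation "e₂" => ((0, 1) : ZMod 2 × ZMod 2)
local notation "e₃" => ((1, 1) : ZMod 2 × ZMod 2)

variable {K : Type*} [Field K]

def SolvesSystem (c : ZMod 2 × ZMod 2 → ZMod 2 × ZMod 2 → K) : Prop :=
  ∀ m n k : ZMod 2 × ZMod 2, m ≠ 0 → n ≠ 0 →
    c m (n + k) * c n k - c n (m + k) * c m k =
      ((-1 : K) ^ (m.2.val * n.1.val) - (-1 : K) ^ (m.1.val * n.2.val)) * c (m + n) k

def IsNormalized (c : ZMod 2 × ZMod 2 → ZMod 2 × ZMod 2 → K) : Prop :=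
  c e₁ 0 = 1 ∧ c e₁ e₂ = 1 ∧ c e₂ e₁ = -1

variable {c : ZMod 2 × ZMod 2 → ZMod 2 × ZMod 2 → K}

theorem SolvesSystem.rel₁₂ (hc : SolvesSystem c) (k : ZMod 2 × ZMod 2) :
    c e₁ (e₂ + k) * c e₂ k - c e₂ (e₁ + k) * c e₁ k = 2 * c e₃ k := by
  have h := hc e₁ e₂ k (by decide) (by decide)
  simp only [Prod.mk_add_mk, ZMod.val_one, ZMod.val_zero] at h
  norm_num at h
  linear_combination h

theorem SolvesSystem.rel₁₃ (hc : SolvesSystem c) (k : ZMod 2 × ZMod 2) :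
    c e₁ (e₃ + k) * c e₃ k - c e₃ (e₁ + k) * c e₁ k = 2 * c e₂ k := by
  have h := hc e₁ e₃ k (by decide) (by decide)
  simp only [Prod.mk_add_mk, CharTwo.add_self_eq_zero, ZMod.val_one, ZMod.val_zero] at h
  norm_num at h
  linear_combination h

theorem SolvesSystem.rel₂₃ (hc : SolvesSystem c) (k : ZMod 2 × ZMod 2) :
    c e₂ (e₃ + k) * c e₃ k - c e₃ (e₂ + k) * c e₂ k = -2 * c e₁ k := by
  have h := hc e₂ e₃ k (by decide) (by decide)
  simp only [Prod.mk_add_mk, CharTwo.add_self_eq_zero, ZMod.val_one, ZMod.val_zero] at h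
  norm_num at h
  linear_combination h

theorem SolvesSystem.sq_mul_eq_one [NeZero (2 : K)] (hc : SolvesSystem c) (hn : IsNormalized c) :
    c e₃ 0 ^ 2 * c e₁ e₁ = 1 := by
  obtain ⟨h₁, h₂, h₃⟩ := hn
  have A₀ := hc.rel₁₂ 0
  have A₁ := hc.rel₁₂ e₁
  have B₀ := hc.rel₁₃ 0
  have B₁ := hc.rel₁₃ e₁
  simp only [Prod.mk_add_mk, CharTwo.add_self_eq_zero, add_zero, zero_add, Prod.mk_zero_zero,
    h₁, h₂, h₃] at A₀ A₁ B₀ B₁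
  apply mul_left_cancel₀ (pow_ne_zero 3 (two_ne_zero : (2 : K) ≠ 0))
  linear_combination (-(4 + 2 * c e₃ 0 * c e₁ e₁)) * A₀ - 2 * c e₃ 0 * A₁ - 2 * B₀
    - (2 + 4 * c e₃ 0) * B₁

theorem SolvesSystem.mul_eq_one [NeZero (2 : K)] (hc : SolvesSystem c) (hn : IsNormalized c) :
    c e₃ 0 * c e₃ e₂ = 1 := by
  obtain ⟨h₁, h₂, h₃⟩ := hn
  have A₀ := hc.rel₁₂ 0
  have A₂ := hc.rel₁₂ e₂
  have C₀ := hc.rel₂₃ 0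
  have C₂ := hc.rel₂₃ e₂
  simp only [Prod.mk_add_mk, CharTwo.add_self_eq_zero, add_zero, zero_add, Prod.mk_zero_zero,
    h₁, h₂, h₃] at A₀ A₂ C₀ C₂
  apply mul_left_cancel₀ (pow_ne_zero 2 (two_ne_zero : (2 : K) ≠ 0))
  linear_combination -C₀ - C₂ - c e₃ 0 * A₂ - c e₃ e₂ * A₀

theorem SolvesSystem.apply_e₃_e₂ [NeZero (2 : K)] (hc : SolvesSystem c) (hn : IsNormalized c) :
    c e₃ e₂ = 1 := by
  have hsq := hc.sq_mul_eq_one hn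
  have hmul := hc.mul_eq_one hn
  obtain ⟨h₁, h₂, h₃⟩ := hn
  have A₀ := hc.rel₁₂ 0
  have A₁ := hc.rel₁₂ e₁
  have A₂ := hc.rel₁₂ e₂
  have B₁ := hc.rel₁₃ e₁
  have B₂ := hc.rel₁₃ e₂
  have B₃ := hc.rel₁₃ e₃
  have C₂ := hc.rel₂₃ e₂
  simp only [Prod.mk_add_mk, CharTwo.add_self_eq_zero, add_zero, zero_add, Prod.mk_zero_zero,
    h₁, h₂, h₃] at A₀ A₁ A₂ B₁ B₂ B₃ C₂
  set t := c e₃ e₂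
  have ha₁ : c e₁ e₁ = t ^ 2 := by
    linear_combination t ^ 2 * hsq - c e₁ e₁ * (c e₃ 0 * t + 1) * hmul
  have ha₃ : c e₁ e₃ = (2 - t) ^ 2 := by
    linear_combination -c e₁ e₁ * A₀ - 2 * B₁ - A₁ - 4 * t * hmul + (1 - 4 * c e₃ 0) * ha₁
  have hb₂ : c e₂ e₂ = t * (2 - t) := by
    linear_combination -t * C₂ - c e₂ e₂ * hmul
  have hb₃ : c e₂ e₃ = -t ^ 2 := by
    linear_combination hb₂ - A₂
  have hd₃ : c e₃ e₃ = t * (t ^ 2 + 2 * t - 4) := by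
    linear_combination t * ha₁ - 2 * hb₂ - B₂
  have ht : (2 : K) ^ 3 * t * (t - 1) = 0 := by
    linear_combination B₃ - hd₃ + t * ha₃ + 2 * hb₃
  have ht₀ : t ≠ 0 := right_ne_zero_of_mul_eq_one hmul
  simpa [ht₀, sub_eq_zero, two_ne_zero] using ht

theorem SolvesSystem.apply_eq [NeZero (2 : K)] (hc : SolvesSystem c) (hn : IsNormalized c)
    {m : ZMod 2 × ZMod 2} (hm : m ≠ 0) (k : ZMod 2 × ZMod 2) :
    c m k = (-1) ^ (m.2.val * k.1.val) := by
  have hd₂ := hc.apply_e₃_e₂ hn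
  have hd₀ : c e₃ 0 = 1 := by simpa [hd₂] using hc.mul_eq_one hn
  have ha₁ : c e₁ e₁ = 1 := by simpa [hd₀] using hc.sq_mul_eq_one hn
  obtain ⟨h₁, h₂, h₃⟩ := hn
  have A₀ := hc.rel₁₂ 0
  have A₁ := hc.rel₁₂ e₁
  have A₂ := hc.rel₁₂ e₂
  have B₁ := hc.rel₁₃ e₁
  have B₂ := hc.rel₁₃ e₂
  have C₂ := hc.rel₂₃ e₂
  simp only [Prod.mk_add_mk, CharTwo.add_self_eq_zero, add_zero, zero_add, Prod.mk_zero_zero,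
    h₁, h₂, h₃, hd₀, hd₂, ha₁] at A₀ A₁ A₂ B₁ B₂ C₂
  have hb₀ : c e₂ 0 = 1 := by linear_combination A₀
  have hb₂ : c e₂ e₂ = 1 := by linear_combination -C₂
  have hb₃ : c e₂ e₃ = -1 := by linear_combination hb₂ - A₂
  have hd₁ : c e₃ e₁ = -1 := by linear_combination B₁
  have ha₃ : c e₁ e₃ = 1 := by linear_combination -A₁ - hb₀ - 2 * hd₁
  have hd₃ : c e₃ e₃ = -1 := by linear_combination -B₂ - 2 * hb₂
  obtain rfl | rfl | rfl : m = e₁ ∨ m = e₂ ∨ m = e₃ := by revert m; decide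
  all_goals
    obtain rfl | rfl | rfl | rfl : k = 0 ∨ k = e₁ ∨ k = e₂ ∨ k = e₃ := by revert k; decide
    all_goals norm_num [ZMod.val_one, h₁, h₂, h₃, ha₁, ha₃, hb₀, hb₂, hb₃, hd₀, hd₁, hd₂, hd₃]

end ZModTwoSystem

open ZModTwoSystem in
theorem stmt_17_general (c : ZMod 2 × ZMod 2 → ZMod 2 × ZMod 2 → ℂ)
    (hsys : ∀ m n k : ZMod 2 × ZMod 2, m ≠ 0 → n ≠ 0 →
      c m (n + k) * c n k - c n (m + k) * c m k =
        ((-1 : ℂ) ^ (m.2.val * n.1.val) - (-1 : ℂ) ^ (m.1.val * n.2.val)) * c (m + n) k)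
    (h1 : c (1, 0) (0, 0) = 1) (h2 : c (1, 0) (0, 1) = 1)
    (h3 : c (0, 1) (1, 0) = (-1 : ℂ) ^ (1 * 1 : ℕ)) :
    ∀ m k : ZMod 2 × ZMod 2, m ≠ 0 → c m k = (-1 : ℂ) ^ (m.2.val * k.1.val) := by
  have hn : IsNormalized c := ⟨h1, h2, by simpa using h3⟩
  intro m k hm
  exact SolvesSystem.apply_eq hsys hn hm k

/-- Subcase (a) of Theorem 2.3 (`N = 2`, `q = −1`): if `c` on `(ℤ²/2ℤ²) × (ℤ²/2ℤ²)`
satisfies the system (2.20) (with `c(0,·) = 0`) and is normalized so that (2.22),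
`c(m,k) = (−1)^(m₂k₁)`, holds at the three points `(m,k) = ((1,0),(0,0))`,
`((1,0),(0,1))`, `((0,1),(1,0))` (values `1, 1, (−1)^(1·1) = −1` respectively),
then `c(m,k) = (−1)^(m₂k₁)` for all `m ≠ 0`, `k`. -/
theorem stmt_17 (c : ZMod 2 × ZMod 2 → ZMod 2 × ZMod 2 → ℂ)
    (hc0 : ∀ k : ZMod 2 × ZMod 2, c 0 k = 0)
    (hsys : ∀ m n k : ZMod 2 × ZMod 2, m ≠ 0 → n ≠ 0 →
      c m (n + k) * c n k - c n (m + k) * c m k =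
        ((-1 : ℂ) ^ (m.2.val * n.1.val) - (-1 : ℂ) ^ (m.1.val * n.2.val)) * c (m + n) k)
    (h1 : c (1, 0) (0, 0) = 1) (h2 : c (1, 0) (0, 1) = 1)
    (h3 : c (0, 1) (1, 0) = (-1 : ℂ) ^ (1 * 1 : ℕ)) :
    ∀ m k : ZMod 2 × ZMod 2, m ≠ 0 → c m k = (-1 : ℂ) ^ (m.2.val * k.1.val) :=
  stmt_17_general c hsys h1 h2 h3
end

section
/- Let N = 2, q = −1. Suppose c : (Z^2/2Z^2 \ {0}) × (Z^2/2Z^2) → C satisfies the system c(m, n+k)c(n, k) − c(n, m+k)c(m, k) = ((−1)^{m2 n1} − (−1)^{m1 n2}) c(m+n, k) for all m, n ∈ Z^2/2Z^2 \ {0}, k ∈ Z^2/2Z^2 (with c(0,·) := 0), together with the conditions c(m,(1,1)) = (−1)^{m2} − (−1)^{m1} for m = (1,0),(0,1), and c(m,k) = 0 for (m,k) ∈ {((1,0),(1,0)), ((0,1),(0,1)), ((1,0),(0,0)), ((0,1),(0,0))}. Then c(m,k) = (−1)^{m2 k1} − (−1)^{m1 k2} for all m ∈ Z^2/2Z^2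 \ {0}, k ∈ Z^2/2Z^2. -/
/-- Case 2 of Theorem 2.3 (`N = 2`, `q = −1`): if `c` on `(ℤ²/2ℤ²) × (ℤ²/2ℤ²)`
satisfies the system (2.20) (with `c(0,·) = 0`), the normalization (2.24)
`c(m,(1,1)) = (−1)^(m₂) − (−1)^(m₁)` for `m = (1,0), (0,1)`, and the vanishing
conditions `c((1,0),(1,0)) = c((0,1),(0,1)) = c((1,0),(0,0)) = c((0,1),(0,0)) = 0`,
then `c(m,k) = (−1)^(m₂k₁) − (−1)^(m₁k₂)` for all `m ≠ 0`, `k`. -/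
theorem stmt_18 (c : ZMod 2 × ZMod 2 → ZMod 2 × ZMod 2 → ℂ)
    (hc0 : ∀ k : ZMod 2 × ZMod 2, c 0 k = 0)
    (hsys : ∀ m n k : ZMod 2 × ZMod 2, m ≠ 0 → n ≠ 0 →
      c m (n + k) * c n k - c n (m + k) * c m k =
        ((-1 : ℂ) ^ (m.2.val * n.1.val) - (-1 : ℂ) ^ (m.1.val * n.2.val)) * c (m + n) k)
    (h1 : c (1, 0) (1, 1) = (-1 : ℂ) ^ (((1, 0) : ZMod 2 × ZMod 2).2.val)
        - (-1 : ℂ) ^ (((1, 0) : ZMod 2 × ZMod 2).1.val))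
    (h2 : c (0, 1) (1, 1) = (-1 : ℂ) ^ (((0, 1) : ZMod 2 × ZMod 2).2.val)
        - (-1 : ℂ) ^ (((0, 1) : ZMod 2 × ZMod 2).1.val))
    (h3 : c (1, 0) (1, 0) = 0) (h4 : c (0, 1) (0, 1) = 0)
    (h5 : c (1, 0) (0, 0) = 0) (h6 : c (0, 1) (0, 0) = 0) :
    ∀ m k : ZMod 2 × ZMod 2, m ≠ 0 →
      c m k = (-1 : ℂ) ^ (m.2.val * k.1.val) - (-1 : ℂ) ^ (m.1.val * k.2.val) := by
  have ha : ((1, 0) : ZMod 2 × ZMod 2) ≠ 0 := by decide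
  have hb : ((0, 1) : ZMod 2 × ZMod 2) ≠ 0 := by decide
  have hd : ((1, 1) : ZMod 2 × ZMod 2) ≠ 0 := by decide
  have h0 : ((0, 0) : ZMod 2 × ZMod 2) = 0 := rfl
  have hone : ((1, 1) : ZMod 2 × ZMod 2) = 1 := rfl
  have v1 : (1 : ZMod 2).val = 1 := rfl
  have v0 : (0 : ZMod 2).val = 0 := rfl
  have sab : ((1, 0) : ZMod 2 × ZMod 2) + (0, 1) = 1 := by decide
  have sad : ((1, 0) : ZMod 2 × ZMod 2) + (1, 1) = (0, 1) := by decide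
  have sbd : ((0, 1) : ZMod 2 × ZMod 2) + (1, 1) = (1, 0) := by decide
  have saa : ((1, 0) : ZMod 2 × ZMod 2) + (1, 0) = 0 := by decide
  have sbb : ((0, 1) : ZMod 2 × ZMod 2) + (0, 1) = 0 := by decide
  have sdd : ((1, 1) : ZMod 2 × ZMod 2) + (1, 1) = 0 := by decide
  have sa0 : ((1, 0) : ZMod 2 × ZMod 2) + (0, 0) = (1, 0) := by decide
  have sb0 : ((0, 1) : ZMod 2 × ZMod 2) + (0, 0) = (0, 1) := by decide
  rw [h0] at h5 h6
  rw [hone] at h1 h2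
  norm_num [v1] at h1 h2
  -- h1 : c (1,0) 1 = 2,  h2 : c (0,1) 1 = -2
  -- c (1,1) 0 = 0 :
  have E1 := hsys (1, 0) (0, 1) (0, 0) ha hb
  rw [sb0, sab, h0] at E1
  norm_num [h5, h6, v1] at E1
  -- c 1 (0,1) = 2 :
  have E3 := hsys (1, 0) (1, 1) (1, 1) ha hd
  rw [sdd, sad, hone] at E3
  norm_num [hc0, h1, h2, h5, v1] at E3
  -- c (1,0) (0,1) = 2 :
  have E2 := hsys (1, 0) (0, 1) (0, 1) ha hb
  rw [sbb, sab] at E2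
  norm_num [hc0, h2, h4, E3, v1] at E2
  -- c 1 (1,0) = -2 :
  have E5 := hsys (0, 1) (1, 1) (1, 1) hb hd
  rw [sdd, sbd, hone] at E5
  norm_num [hc0, h1, h2, h6, v1] at E5
  -- c (0,1) (1,0) = -2 :
  have E4 := hsys (1, 0) (0, 1) (1, 0) ha hb
  rw [sab, saa] at E4
  norm_num [hc0, hone, h1, h3, E5, v1] at E4
  -- c 1 1 = 0 :
  have E6 := hsys (1, 0) (0, 1) (1, 1) ha hb
  rw [sbd, sad, sab, hone] at E6
  norm_num [h1, h2, h3, h4, v1] at E6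
  have E3' : c 1 (0, 1) = 2 := by linear_combination E3 / 2
  have E5' : c 1 (1, 0) = -2 := by linear_combination E5 / 2
  intro m k hm
  obtain ⟨m1, m2⟩ := m
  obtain ⟨k1, k2⟩ := k
  have z2 : ∀ x : ZMod 2, x = 0 ∨ x = 1 := by decide
  rcases z2 m1 with rfl | rfl <;> rcases z2 m2 with rfl | rfl <;> rcases z2 k1 with rfl | rfl <;> rcases z2 k2 with rfl | rfl <;>
    first
    | exact absurd rfl hm
    | (norm_num [v0, v1, h0, hone, h1, h2, h3, h4, h5, h6, E1, E2, E3', E4, E5', E6])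
end

section
/- Let L be a centerless perfect Lie algebra (i.e., Z(L) = 0 and [L,L] = L). Then the derivation algebra Der(L) is complete: it has trivial center and every derivation of Der(L) is inner. -/
/-- A centerless perfect Lie algebra has a complete derivation algebra: if
`Z(L) = 0` and `[L,L] = L`, then `Der L` has trivial center and every derivation
of `Der L` is inner. -/
theorem stmt_19 (L : Type*) [LieRing L] [LieAlgebra ℂ L]
    (hZ : LieAlgebra.center ℂ L = ⊥)
    (hperf : ⁅(⊤ : LieIdeal ℂ L), (⊤ : LieIdeal ℂ L)⁆ = ⊤) :
    LieAlgebra.center ℂ (LieDerivation ℂ L L) = ⊥ ∧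
      ∀ D : LieDerivation ℂ (LieDerivation ℂ L L) (LieDerivation ℂ L L),
        ∃ E : LieDerivation ℂ L L, ∀ F : LieDerivation ℂ L L, D F = ⁅E, F⁆ := by
  have hinj : Function.Injective (LieDerivation.ad ℂ L) :=
    LieDerivation.injective_ad_of_center_eq_bot hZ
  have had : ∀ (D : LieDerivation ℂ L L) (x : L),
      ⁅x, D⁆ = - LieDerivation.ad ℂ L (D x) := fun D x => by
    rw [LieDerivation.ad_apply_lieDerivation, neg_neg]
  constructor
  · rw [LieSubmodule.eq_bot_iff]
    intro D hD
    rw [LieModule.mem_maxTrivSubmodule] at hD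
    ext x
    have h0 : LieDerivation.ad ℂ L (D x) = 0 := by
      rw [LieDerivation.ad_apply_lieDerivation, ← LieDerivation.lie_ad, hD, neg_zero]
    have hDx : D x = 0 := hinj (a₂ := 0) (by rw [h0, map_zero (LieDerivation.ad ℂ L)])
    simp [hDx]
  · intro Δ
    -- key: the image under `Δ ∘ ad` of any bracket is in the range of `ad`
    have key : ∀ a b : L, ∃ y : L,
        LieDerivation.ad ℂ L y = Δ (LieDerivation.ad ℂ L ⁅a, b⁆) := by
      intro a b
      refine ⟨(Δ (LieDerivation.ad ℂ L a)) b - (Δ (LieDerivation.ad ℂ L b)) a, ?_⟩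
      rw [LieHom.map_lie, LieDerivation.apply_lie_eq_sub, LieDerivation.lie_ad,
        LieDerivation.lie_ad, had, had, map_sub (LieDerivation.ad ℂ L)]
      abel
    -- the set of `x` with `Δ (ad x) ∈ range ad` is a Lie ideal containing `[L,L] = L`
    let S : Submodule ℂ L :=
      { carrier := {x | ∃ y : L, LieDerivation.ad ℂ L y = Δ (LieDerivation.ad ℂ L x)}
        add_mem' := by
          rintro x₁ x₂ ⟨y₁, hy₁⟩ ⟨y₂, hy₂⟩
          exact ⟨y₁ + y₂, by rw [map_add (LieDerivation.ad ℂ L), hy₁, hy₂, map_add (LieDerivation.ad ℂ L), map_add]⟩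
        zero_mem' := ⟨0, by simp⟩
        smul_mem' := by
          rintro c x ⟨y, hy⟩
          exact ⟨c • y, by rw [map_smul (LieDerivation.ad ℂ L), hy, map_smul (LieDerivation.ad ℂ L), map_smul]⟩ }
    let I : LieIdeal ℂ L := { S with lie_mem := fun {x m} _ => key x m }
    have htop : (⊤ : LieIdeal ℂ L) ≤ I := by
      rw [← hperf]
      exact (LieSubmodule.lie_le_iff _ _ _).mpr fun a _ b _ => key a b
    have hx : ∀ x : L, ∃ y : L,
        LieDerivation.ad ℂ L y = Δ (LieDerivation.ad ℂ L x) :=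
      fun x => htop (LieSubmodule.mem_top x)
    choose e he using hx
    refine ⟨⟨{ toFun := e
               map_add' := fun a b =>
                 hinj (by rw [he, map_add (LieDerivation.ad ℂ L), map_add, ← he a, ← he b, map_add (LieDerivation.ad ℂ L)])
               map_smul' := fun c a => by
                 refine hinj ?_
                 simp only [RingHom.id_apply]
                 rw [he, map_smul (LieDerivation.ad ℂ L), map_smul, ← he a, map_smul (LieDerivation.ad ℂ L)] },
             fun a b => hinj ?_⟩, fun F => ?_⟩
    · show LieDerivation.ad ℂ L (e ⁅a, b⁆) =
        LieDerivation.ad ℂ L (⁅a, e b⁆ - ⁅b, e a⁆)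
      rw [he, LieHom.map_lie, LieDerivation.apply_lie_eq_sub, ← he a, ← he b,
        map_sub (LieDerivation.ad ℂ L), ← LieHom.map_lie, ← LieHom.map_lie]
    · ext x
      rw [LieDerivation.commutator_apply]
      refine hinj ?_
      show LieDerivation.ad ℂ L ((Δ F) x) = LieDerivation.ad ℂ L (e (F x) - F (e x))
      have h1 := LieDerivation.apply_lie_eq_sub Δ F (LieDerivation.ad ℂ L x)
      rw [LieDerivation.lie_der_ad_eq_ad_der F x, ← he (F x), ← he x,
        LieDerivation.lie_der_ad_eq_ad_der F (e x), LieDerivation.lie_ad,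
        had (Δ F) x, sub_neg_eq_add] at h1
      rw [map_sub (LieDerivation.ad ℂ L), h1]
      abel
end
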